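/- Under the hypotheses of the previous statement (P of length m, T of length n ≤ 3m/2, k ∈ [0,m], both the length-m prefix and the length-m suffix of T are k-mismatch occurrences of P, d ≥ 2k positive, Q primitive with |Q| ≤ m/(8d), δ_H(P,Q*) ≤ d), the whole text satisfies δ_H(T, Q*) ≤ 3d. -/

import Mathlib

open List

variable {α : Type*}

/-- The fragment S[i..j) of a string (list) S. -/
def frag (S : List α) (i j : ℕ) : List α := (S.drop i).take (j - i)

/-- Q^∞[a..b): the fragment of the infinite repetition of Q from a (incl.) to b (excl.). -/
def repPrefix [Inhabited α] (Q : List α) (a b : ℕ) : List α :=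
  (List.range' a (b - a)).map (fun i => Q.getD (i % Q.length) default)

/-- Hamming distance of two strings of the same length (counted over positions of S). -/
def hamming [DecidableEq α] [Inhabited α] (S T : List α) : ℕ :=
  ((Finset.range S.length).filter
    (fun i => S.getD i default ≠ T.getD i default)).card

/-- δ_H(S, Q*): Hamming distance of S to the length-|S| prefix of Q^∞. -/
def hammingStar [DecidableEq α] [Inhabited α] (S Q : List α) : ℕ :=
  hamming S (repPrefix Q 0 S.length)

/-- Cost structure for Levenshtein distance (removed from Mathlib; restored with its old meaning). -/
structure Levenshtein.Cost (α β δ : Type*) where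
  delete : α → δ
  insert : β → δ
  substitute : α → β → δ

/-- Unit costs, as in the old Mathlib `Levenshtein.defaultCost`. -/
def Levenshtein.defaultCost [DecidableEq α] : Levenshtein.Cost α α ℕ where
  delete _ := 1
  insert _ := 1
  substitute a b := if a = b then 0 else 1

/-- Levenshtein distance with cost `C`, by the recursion old Mathlib proved for `levenshtein`. -/
def levenshtein {β : Type*} (C : Levenshtein.Cost α β ℕ) : List α → List β → ℕ
  | [], ys => (ys.map C.insert).sum
  | x :: xs, [] => C.delete x + levenshtein C xs []
  | x :: xs, y :: ys => min (C.delete x + levenshtein C xs (y :: ys))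
      (min (C.insert y + levenshtein C (x :: xs) ys) (C.substitute x y + levenshtein C xs ys))

/-- Edit (Levenshtein) distance. -/
def editDist [DecidableEq α] (S T : List α) : ℕ :=
  levenshtein Levenshtein.defaultCost S T

/-- A string is primitive if it is nonempty and not a proper power of a string. -/
def Primitive (Q : List α) : Prop :=
  Q ≠ [] ∧ ∀ (U : List α) (t : ℕ), 2 ≤ t → Q ≠ (List.replicate t U).flatten

/-- p is a period of S. -/
def IsPeriod [Inhabited α] (p : ℕ) (S : List α) : Prop :=
  0 < p ∧ ∀ i, i + p < S.length → S.getD i default = S.getD (i + p) default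

/-- per(S): the smallest period of S. -/
noncomputable def per [Inhabited α] (S : List α) : ℕ := sInf {p | IsPeriod p S}

/-- Occ^H_k(P,T): starting positions of k-mismatch occurrences of P in T. -/
def occH [DecidableEq α] [Inhabited α] (k : ℕ) (P T : List α) : Finset ℕ :=
  (Finset.range (T.length - P.length + 1)).filter
    (fun i => hamming P (frag T i (i + P.length)) ≤ k)

/-- Exact occurrences of B in T. -/
def occExact [DecidableEq α] (B T : List α) : Finset ℕ :=
  (Finset.range (T.length + 1)).filter (fun i => frag T i (i + B.length) = B)

/-- Occ^E_k(P,T): starting positions of k-error (edit distance) occurrences of P in T. -/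
def occE [DecidableEq α] (k : ℕ) (P T : List α) : Set ℕ :=
  {i | ∃ j, i ≤ j ∧ j ≤ T.length ∧ editDist P (frag T i j) ≤ k}

/-- δ_E^cyc(S,Q): minimum edit distance of S to any substring of Q^∞. -/
noncomputable def edCyc [DecidableEq α] [Inhabited α] (S Q : List α) : ℕ :=
  sInf {d | ∃ i j, i ≤ j ∧ d = editDist S (repPrefix Q i j)}

/-- δ_E(S,Q*): minimum edit distance of S to a prefix of Q^∞. -/
noncomputable def edStar [DecidableEq α] [Inhabited α] (S Q : List α) : ℕ :=
  sInf {d | ∃ j, d = editDist S (repPrefix Q 0 j)}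

/-- Minimum edit distance of T to a substring of Q^∞ starting at position x. -/
noncomputable def edStarAt [DecidableEq α] [Inhabited α] (T Q : List α) (x : ℕ) : ℕ :=
  sInf {d | ∃ j, x ≤ j ∧ d = editDist T (repPrefix Q x j)}

/-- Minimum edit distance of T to a substring of Q^∞ ending at a position ≡ y (mod |Q|). -/
noncomputable def edEndAt [DecidableEq α] [Inhabited α] (T Q : List α) (y : ℕ) : ℕ :=
  sInf {d | ∃ i j, i ≤ j ∧ j % Q.length = y % Q.length ∧ d = editDist T (repPrefix Q i j)}

/-- Minimum edit distance of L to a substring of Q^∞ ending at a multiple of |Q|. -/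
noncomputable def edEndMul [DecidableEq α] [Inhabited α] (L Q : List α) : ℕ :=
  sInf {d | ∃ i j, i ≤ j * Q.length ∧ d = editDist L (repPrefix Q i (j * Q.length))}

/-- The fragment S[i..j) of S is locked with respect to Q. -/
def Locked [DecidableEq α] [Inhabited α] (S Q : List α) (i j : ℕ) : Prop :=
  (∃ a : ℕ, edCyc (frag S i j) Q = editDist (frag S i j) (repPrefix Q 0 (a * Q.length))) ∨
  (j = S.length ∧ edCyc (frag S i j) Q = edStar (frag S i j) Q) ∨
  (i = 0 ∧ edCyc (frag S i j) Q = edEndMul (frag S i j) Q) ∨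
  (i = 0 ∧ j = S.length)

/-- rot^j(Q): rotation moving the last j (mod |Q|) characters to the front. -/
def rotR (Q : List α) (j : ℕ) : List α := Q.rotate (Q.length - j % Q.length)

/-- |Mis(T,Q*) ∩ [a,b)|. -/
def misCount [DecidableEq α] [Inhabited α] (T Q : List α) (a b : ℕ) : ℕ :=
  ((Finset.Ico a b).filter (fun i => i < T.length ∧
     T.getD i default ≠ Q.getD (i % Q.length) default)).card

/-- μ_j: the total weight of aligned mismatch pairs of P and T against Q^∞ at shift j·|Q|:
a pair (τ = j|Q|+π, π) with π ∈ Mis(P,Q*), τ ∈ Mis(T,Q*) has weight 2 − δ_H(P[π],T[τ]). -/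
def mu [DecidableEq α] [Inhabited α] (P T Q : List α) (j : ℕ) : ℕ :=
  ∑ π ∈ Finset.range P.length,
    if P.getD π default ≠ Q.getD (π % Q.length) default ∧
       j * Q.length + π < T.length ∧
       T.getD (j * Q.length + π) default ≠ Q.getD ((j * Q.length + π) % Q.length) default
    then (if P.getD π default = T.getD (j * Q.length + π) default then 2 else 1)
    else 0

/-!
With `o = n - m`, the prefix window of `T` is `(d + k)`-close to `Q^∞` and the suffix window,
read from position `o`, is `(d + k)`-close to `Q^∞` read from `0`. On their overlap, of length
`2m - n ≥ 4d|Q|`, this leaves at most `2(d + k) ≤ 3d < 4d` positions where `Q^∞` differs from its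
shift by `o`. If `|Q| ∤ o`, the shift differs from `Q^∞` somewhere (`Q` is primitive, and a
common period `gcd(o, |Q|) < |Q|` would make `Q` a proper power), hence in every one of the `4d`
blocks of length `|Q|`. So `|Q| ∣ o`, both windows are compared with the same copy of `Q^∞`, and
together they cover `T` with at most `2(d + k) ≤ 3d` mismatches.
-/

theorem Function.Periodic.nat_gcd {f : ℕ → α} {a b : ℕ} (ha : Function.Periodic f a)
    (hb : Function.Periodic f b) : Function.Periodic f (a.gcd b) := by
  have shift_iterate : ∀ c (g : ℕ → α), (fun u i => u (i + 1))^[c] g = fun i => g (i + c) := by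
    intro c
    induction c with
    | zero => simp
    | succ c ih => intro g; rw [Function.iterate_succ_apply, ih]; simp [add_assoc]
  -- periods of `f` are its periods as a point of the shift map, where `IsPeriodicPt.gcd` applies
  have periodic_iff :
      ∀ c, Function.Periodic f c ↔ Function.IsPeriodicPt (fun u i => u (i + 1)) c f := by
    intro c
    rw [Function.IsPeriodicPt, Function.IsFixedPt, shift_iterate, funext_iff]
    rfl
  rw [periodic_iff] at *
  exact ha.gcd hb

theorem List.eq_flatten_replicate_take_of_isPeriod [Inhabited α] {g : ℕ} :
    ∀ (t : ℕ) (L : List α), IsPeriod g L → L.length = t * g →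
      L = (List.replicate t (L.take g)).flatten
  | 0, L, _, hlen => by simpa using hlen
  | t + 1, L, hL, hlen => by
    have hdrop : IsPeriod g (L.drop g) := ⟨hL.1, fun i hi => by
      simp only [List.length_drop] at hi
      simpa [List.getD_eq_getElem?_getD, add_right_comm i g g, add_comm g] using
        hL.2 (g + i) (by omega)⟩
    have hblocks : List.replicate t ((L.drop g).take g) = List.replicate t (L.take g) := by
      rcases t with _ | t
      · rfl
      have hlong : g + g ≤ L.length := by rw [hlen]; nlinarith
      refine congrArg _ (List.ext_getElem
        (by simp only [List.length_take, List.length_drop]; omega) fun i h₁ h₂ => ?_)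
      simp only [List.length_take, List.length_drop] at h₁ h₂
      have := hL.2 i (by omega)
      rw [List.getD_eq_getElem _ _ (by omega), List.getD_eq_getElem _ _ (by omega)] at this
      simp [this, add_comm]
    rw [List.replicate_succ, List.flatten_cons, ← hblocks,
      ← eq_flatten_replicate_take_of_isPeriod t _ hdrop (by simp [hlen, add_mul]),
      List.take_append_drop]

theorem periodic_getD_mod_length (Q : List α) (x : α) :
    Function.Periodic (fun i => Q.getD (i % Q.length) x) Q.length := fun i => by simp

theorem Primitive.not_isPeriod [Inhabited α] {Q : List α} (hQ : Primitive Q) {g : ℕ}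
    (hg : g ∣ Q.length) (hlt : g < Q.length) : ¬IsPeriod g Q := by
  intro hper
  obtain ⟨t, ht⟩ := hg
  refine hQ.2 (Q.take g) t ?_
    (Q.eq_flatten_replicate_take_of_isPeriod t hper (by rw [ht, mul_comm]))
  by_contra! ht1
  have : g * t ≤ g * 1 := Nat.mul_le_mul_left g (by omega)
  omega

theorem Primitive.dvd_of_periodic [Inhabited α] {Q : List α} (hQ : Primitive Q) {o : ℕ}
    (ho : Function.Periodic (fun i => Q.getD (i % Q.length) default) o) : Q.length ∣ o := by
  have hq : 0 < Q.length := List.length_pos_iff.mpr hQ.1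
  have hgcd := ho.nat_gcd (periodic_getD_mod_length Q default)
  have hper : IsPeriod (o.gcd Q.length) Q := ⟨Nat.gcd_pos_of_pos_right o hq, fun i hi => by
    simpa [Nat.mod_eq_of_lt (show i < Q.length by omega), Nat.mod_eq_of_lt hi] using
      (hgcd i).symm⟩
  by_contra hndvd
  refine hQ.not_isPeriod (Nat.gcd_dvd_right o _) ?_ hper
  exact lt_of_le_of_ne (Nat.gcd_le_right _ hq) fun h => hndvd (h ▸ Nat.gcd_dvd_left o _)

section HammingOn

variable {ι : Type*} [DecidableEq α]

def hammingOn (s : Finset ι) (u v : ι → α) : ℕ := (s.filter fun i => u i ≠ v i).card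

variable {s s' : Finset ι} {u v w : ι → α}

theorem hammingOn_comm : hammingOn s u v = hammingOn s v u := by
  simp only [hammingOn, ne_comm]

theorem hammingOn_triangle : hammingOn s u w ≤ hammingOn s u v + hammingOn s v w := by
  classical
  refine (Finset.card_le_card fun i hi => ?_).trans (Finset.card_union_le _ _)
  simp only [Finset.mem_filter, Finset.mem_union] at hi ⊢
  by_cases h : u i = v i
  · exact Or.inr ⟨hi.1, h ▸ hi.2⟩
  · exact Or.inl ⟨hi.1, h⟩

theorem hammingOn_triangle_left : hammingOn s u v ≤ hammingOn s w u + hammingOn s w v :=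
  hammingOn_comm (u := u) ▸ hammingOn_triangle

theorem hammingOn_mono (h : s ⊆ s') : hammingOn s u v ≤ hammingOn s' u v :=
  Finset.card_le_card (Finset.filter_subset_filter _ h)

theorem hammingOn_union_le [DecidableEq ι] :
    hammingOn (s ∪ s') u v ≤ hammingOn s u v + hammingOn s' u v := by
  rw [hammingOn, Finset.filter_union]
  exact Finset.card_union_le _ _

theorem hammingOn_congr_right {v' : ι → α} (h : ∀ i ∈ s, v i = v' i) :
    hammingOn s u v = hammingOn s u v' :=
  congrArg Finset.card (Finset.filter_congr fun i hi => by rw [h i hi])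

theorem hammingOn_range_add (a L : ℕ) (u v : ℕ → α) :
    hammingOn (Finset.range L) (fun i => u (a + i)) (fun i => v (a + i)) =
      hammingOn (Finset.Ico a (a + L)) u v := by
  have : Finset.Ico a (a + L) = (Finset.range L).map (addLeftEmbedding a) := by
    rw [Finset.range_eq_Ico, Finset.map_add_left_Ico, add_zero]
  rw [this, hammingOn, hammingOn, Finset.filter_map, Finset.card_map]
  rfl

theorem le_hammingOn_of_periodic {u v : ℕ → α} {q s : ℕ} (hq : 0 < q)
    (hu : Function.Periodic u q) (hv : Function.Periodic v q) (hs : u s ≠ v s) (c : ℕ) :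
    c ≤ hammingOn (Finset.range (c * q)) u v := by
  have hR : Function.Periodic (fun i => u i ≠ v i) q := fun i => by simp only [hu i, hv i]
  have hblock : ∀ j, u (j * q + s % q) ≠ v (j * q + s % q) := fun j => by
    have hmod : (j * q + s % q) % q = s % q := by simp [Nat.add_mod]
    have h₁ := hR.map_mod_nat (j * q + s % q)
    have h₂ := hR.map_mod_nat s
    simp only [hmod] at h₁ h₂
    rwa [← h₁, h₂]
  calc c = (Finset.range c).card := (Finset.card_range c).symm
    _ ≤ hammingOn (Finset.range (c * q)) u v := by
      refine Finset.card_le_card_of_injOn (fun j => j * q + s % q) (fun j hj => ?_)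
        fun j _ j' _ h => Nat.eq_of_mul_eq_mul_right hq (by simpa using h)
      have : (j + 1) * q ≤ c * q := Nat.mul_le_mul_right q (by simpa using hj)
      have := Nat.mod_lt s hq
      simp only [Finset.coe_filter, Finset.mem_range, Set.mem_ofPred_eq]
      exact ⟨by rw [add_mul] at *; omega, hblock j⟩

end HammingOn

theorem Primitive.le_hammingOn_shift [DecidableEq α] [Inhabited α] {Q : List α}
    (hQ : Primitive Q) {o : ℕ} (ho : ¬Q.length ∣ o) (c : ℕ) :
    c ≤ hammingOn (Finset.range (c * Q.length)) (fun i => Q.getD ((o + i) % Q.length) default)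
      (fun i => Q.getD (i % Q.length) default) := by
  obtain ⟨s, hs⟩ :
      ∃ s, Q.getD ((s + o) % Q.length) default ≠ Q.getD (s % Q.length) default := by
    by_contra! hper
    exact ho (hQ.dvd_of_periodic hper)
  have hw := periodic_getD_mod_length Q default
  exact le_hammingOn_of_periodic (List.length_pos_iff.mpr hQ.1) (s := s)
    (fun i => by simpa [add_assoc] using hw (o + i)) hw (by rwa [add_comm]) c

theorem Primitive.dvd_of_hammingOn_le [DecidableEq α] [Inhabited α] {Q : List α}
    (hQ : Primitive Q) {t : ℕ → α} {m o c e : ℕ}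
    (hpre : hammingOn (Finset.range m) t (fun i => Q.getD (i % Q.length) default) ≤ e)
    (hsuf : hammingOn (Finset.range m) (fun i => t (o + i))
      (fun i => Q.getD (i % Q.length) default) ≤ e)
    (hc : e + e < c) (hoverlap : c * Q.length ≤ m - o) : Q.length ∣ o := by
  set w := fun i => Q.getD (i % Q.length) default
  by_contra ho
  have := calc c
      ≤ hammingOn (Finset.range (c * Q.length)) (fun i => w (o + i)) w := hQ.le_hammingOn_shift ho c
    _ ≤ hammingOn (Finset.range (m - o)) (fun i => w (o + i)) w :=
        hammingOn_mono (Finset.range_subset_range.mpr hoverlap)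
    _ ≤ hammingOn (Finset.range (m - o)) (fun i => w (o + i)) (fun i => t (o + i)) +
          hammingOn (Finset.range (m - o)) (fun i => t (o + i)) w := hammingOn_triangle
    _ = hammingOn (Finset.Ico o (o + (m - o))) t w +
          hammingOn (Finset.range (m - o)) (fun i => t (o + i)) w := by
        rw [hammingOn_range_add, hammingOn_comm]
    _ ≤ hammingOn (Finset.range m) t w + hammingOn (Finset.range m) (fun i => t (o + i)) w :=
        add_le_add
          (hammingOn_mono fun i hi => by
            simp only [Finset.mem_Ico, Finset.mem_range] at hi ⊢; omega)
          (hammingOn_mono (Finset.range_subset_range.mpr (Nat.sub_le m o)))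
  omega

theorem hammingOn_range_add_le_of_periodic [DecidableEq α] {t w : ℕ → α} {o m : ℕ}
    (hw : Function.Periodic w o) (ho : o ≤ m) :
    hammingOn (Finset.range (o + m)) t w ≤
      hammingOn (Finset.range m) t w + hammingOn (Finset.range m) (fun i => t (o + i)) w := by
  have hshift : (fun i => w (o + i)) = w := funext fun i => by rw [add_comm, hw i]
  calc hammingOn (Finset.range (o + m)) t w
      ≤ hammingOn (Finset.range m ∪ Finset.Ico o (o + m)) t w :=
        hammingOn_mono fun i hi => by
          simp only [Finset.mem_range, Finset.mem_union, Finset.mem_Ico] at hi ⊢; omega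
    _ ≤ hammingOn (Finset.range m) t w + hammingOn (Finset.Ico o (o + m)) t w := hammingOn_union_le
    _ = _ := by rw [← hammingOn_range_add, hshift]

theorem getD_repPrefix_zero [Inhabited α] (Q : List α) {L i : ℕ} (h : i < L) :
    (repPrefix Q 0 L).getD i default = Q.getD (i % Q.length) default := by
  simp [repPrefix, List.getD_eq_getElem?_getD, h]

theorem getD_frag_add (T : List α) (x : α) {a l i : ℕ} (h : i < l) :
    (frag T a (a + l)).getD i x = T.getD (a + i) x := by
  simp [frag, List.getD_eq_getElem?_getD, h]

theorem hammingStar_eq_hammingOn [DecidableEq α] [Inhabited α] (S Q : List α) :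
    hammingStar S Q = hammingOn (Finset.range S.length) (fun i => S.getD i default)
      (fun i => Q.getD (i % Q.length) default) :=
  hammingOn_congr_right fun _ hi => getD_repPrefix_zero Q (Finset.mem_range.mp hi)

theorem hamming_frag_eq_hammingOn [DecidableEq α] [Inhabited α] (P T : List α) {a b : ℕ}
    (hab : a + P.length = b) :
    hamming P (frag T a b) = hammingOn (Finset.range P.length)
      (fun i => P.getD i default) (fun i => T.getD (a + i) default) :=
  hab ▸ hammingOn_congr_right fun _ hi => getD_frag_add T default (Finset.mem_range.mp hi)

theorem periodic_text_close_general {α : Type*} [DecidableEq α] [Inhabited α]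
    (P T Q : List α) (m n k d : ℕ)
    (hP : P.length = m) (hT : T.length = n)
    (hmn : m ≤ n) (hn : 2 * n ≤ 3 * m)
    (hpre : hamming P (frag T 0 m) ≤ k) (hsuf : hamming P (frag T (n - m) n) ≤ k)
    (hd0 : 0 < d) (hd : 2 * k ≤ d)
    (hQ : Primitive Q) (hQlen : 8 * d * Q.length ≤ m)
    (hPQ : hammingStar P Q ≤ d) :
    hammingStar T Q ≤ 3 * d := by
  rw [hammingStar_eq_hammingOn, hP] at hPQ
  rw [hamming_frag_eq_hammingOn P T (by omega), hP] at hpre hsuf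
  simp only [zero_add] at hpre
  set o := n - m
  set p := fun i => P.getD i default
  set t := fun i => T.getD i default
  set w := fun i => Q.getD (i % Q.length) default
  change hammingOn (Finset.range m) _ (fun i => t (o + i)) ≤ k at hsuf
  have hprefix : hammingOn (Finset.range m) t w ≤ d + k :=
    (hammingOn_triangle_left (w := p)).trans (by omega)
  have hsuffix : hammingOn (Finset.range m) (fun i => t (o + i)) w ≤ d + k :=
    (hammingOn_triangle_left (w := p)).trans (by omega)
  have hdvd : Q.length ∣ o := hQ.dvd_of_hammingOn_le hprefix hsuffix (c := 4 * d) (by omega)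
    (by rw [mul_assoc] at hQlen ⊢; omega)
  have hw : Function.Periodic w o := by
    obtain ⟨j, hj⟩ := hdvd
    rw [hj, mul_comm]
    exact (periodic_getD_mod_length Q default).nat_mul j
  calc hammingStar T Q = hammingOn (Finset.range (o + m)) t w := by
        rw [hammingStar_eq_hammingOn, hT, Nat.sub_add_cancel hmn]
    _ ≤ 3 * d := (hammingOn_range_add_le_of_periodic hw (by omega)).trans (by omega)

/-- in the periodic case, the whole text is close to Q-periodic. -/
theorem periodic_text_close {α : Type*} [DecidableEq α] [Inhabited α]
    (P T Q : List α) (m n k d : ℕ)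
    (hP : P.length = m) (hT : T.length = n)
    (hmn : m ≤ n) (hn : 2 * n ≤ 3 * m) (hk : k ≤ m)
    (hpre : hamming P (frag T 0 m) ≤ k) (hsuf : hamming P (frag T (n - m) n) ≤ k)
    (hd0 : 0 < d) (hd : 2 * k ≤ d)
    (hQ : Primitive Q) (hQlen : 8 * d * Q.length ≤ m)
    (hPQ : hammingStar P Q ≤ d) :
    hammingStar T Q ≤ 3 * d :=
  periodic_text_close_general P T Q m n k d hP hT hmn hn hpre hsuf hd0 hd hQ hQlen hPQ
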